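/- arXiv:1910.04201 — 4 statements merged into one kernel-verified Lean document; each statement's English description precedes it below -/
import Mathlib

section
/- Smolyak's lemma in dimension 2: there is a constant C depending only on c and α such that for every (c,α)-mixed Hölder function f : [0,1]^2 → ℝ, every x ∈ [0,1)^2 and every m ≥ 1, |f(x) - ∑_{i+j=m} f_{(i,j)} + ∑_{i+j=m-1} f_{(i,j)}| ≤ C 2^{-αm} m, where f_{(i,j)} is the value of f at the center of the dyadic box of dimensions 2^{-i} × 2^{-j} containing x, and the sums range over nonnegative integers i,j. -/
/-- The center of the dyadic interval of length `2^{-i}` containing `x ∈ [0,1)`. -/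
noncomputable def ctr (i : ℕ) (x : ℝ) : ℝ := ((⌊(2:ℝ) ^ i * x⌋ : ℝ) + 1 / 2) / 2 ^ i

/-!
Write `x_k = ctr k x` and `y_k = ctr k y`. The Smolyak error telescopes exactly into the edge
errors `f(x,y) - f(x_m,y)` and `f(x_0,y) - f(x_0,y_m)` plus, for each `k < m`, the mixed
difference of `f` over the rectangle with corners `(x_k, y_{m-1-k})` and `(x_{k+1}, y)`.
Consecutive centers are `2^{-k}` apart and `y_j` lies within `2^{-j-1}` of `y`, so each rectangle
has area at most `2^{-m}`, and each of the `m + 2` terms is at most `c 2^{-αm}`.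
-/

open Finset

lemma sub_ctr_eq (i : ℕ) (x : ℝ) : x - ctr i x = (Int.fract (2 ^ i * x) - 1 / 2) / 2 ^ i := by
  rw [ctr, Int.fract]
  field_simp
  ring

lemma abs_sub_ctr_le (i : ℕ) (x : ℝ) : |x - ctr i x| ≤ (1 / 2) ^ (i + 1) := by
  have hfract : |Int.fract (2 ^ i * x) - 1 / 2| ≤ 1 / 2 := by
    rw [abs_le]
    constructor <;> linarith [Int.fract_nonneg (2 ^ i * x), Int.fract_lt_one (2 ^ i * x)]
  calc |x - ctr i x| = |Int.fract (2 ^ i * x) - 1 / 2| / 2 ^ i := by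
        rw [sub_ctr_eq, abs_div, abs_of_pos (by positivity : (0 : ℝ) < 2 ^ i)]
    _ ≤ (1 / 2) / 2 ^ i := by gcongr
    _ = (1 / 2) ^ (i + 1) := by rw [pow_succ, div_pow, one_pow]; ring

lemma abs_sub_ctr_le_pow (i : ℕ) (x : ℝ) : |x - ctr i x| ≤ (1 / 2) ^ i :=
  (abs_sub_ctr_le i x).trans (pow_le_pow_of_le_one (by norm_num) (by norm_num) i.le_succ)

lemma abs_ctr_succ_sub_ctr_le (i : ℕ) (x : ℝ) : |ctr (i + 1) x - ctr i x| ≤ (1 / 2) ^ i :=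
  calc |ctr (i + 1) x - ctr i x| ≤ |x - ctr (i + 1) x| + |x - ctr i x| := by
        rw [abs_sub_comm x]; exact abs_sub_le _ x _
    _ ≤ (1 / 2) ^ (i + 2) + (1 / 2) ^ (i + 1) :=
        add_le_add (abs_sub_ctr_le _ x) (abs_sub_ctr_le i x)
    _ ≤ (1 / 2) ^ i := by
      rw [pow_succ, pow_succ]
      nlinarith [pow_pos (one_half_pos (α := ℝ)) i]

lemma ctr_mem_Icc (i : ℕ) {x : ℝ} (hx : x ∈ Set.Ico (0 : ℝ) 1) :
    ctr i x ∈ Set.Icc (0 : ℝ) 1 := by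
  have h2 : (0 : ℝ) < 2 ^ i := by positivity
  have hlo : (0 : ℝ) ≤ ⌊(2 : ℝ) ^ i * x⌋ := by
    exact_mod_cast Int.floor_nonneg.mpr (mul_nonneg h2.le hx.1)
  have hhi : (⌊(2 : ℝ) ^ i * x⌋ : ℝ) + 1 ≤ 2 ^ i := by
    have : ⌊(2 : ℝ) ^ i * x⌋ < 2 ^ i := Int.floor_lt.mpr (by push_cast; nlinarith [hx.2])
    exact_mod_cast Int.add_one_le_iff.mpr this
  rw [ctr, Set.mem_Icc, le_div_iff₀ h2, div_le_iff₀ h2]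
  constructor <;> linarith

theorem sub_sum_range_add_sum_range_eq {α β G : Type*} [AddCommGroup G] (f : α → β → G)
    (a : ℕ → α) (b : ℕ → β) (x : α) (y : β) (m : ℕ) :
    f x y - ∑ i ∈ range (m + 1), f (a i) (b (m - i))
        + ∑ i ∈ range m, f (a i) (b (m - 1 - i)) =
      (f x y - f (a m) y) + (f (a 0) y - f (a 0) (b m)) +
        ∑ k ∈ range m, (f (a (k + 1)) y - f (a (k + 1)) (b (m - 1 - k))
          - f (a k) y + f (a k) (b (m - 1 - k))) := by
  have hshift : ∑ k ∈ range m, f (a (k + 1)) (b (m - (k + 1))) =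
      ∑ k ∈ range m, f (a (k + 1)) (b (m - 1 - k)) :=
    sum_congr rfl fun k _ => by rw [Nat.sub_add_eq, Nat.sub_right_comm]
  have htel : ∑ k ∈ range m, f (a (k + 1)) y =
      ∑ k ∈ range m, f (a k) y + f (a m) y - f (a 0) y := by
    rw [eq_sub_iff_add_eq, ← sum_range_succ' (fun k => f (a k) y), sum_range_succ]
  rw [sum_range_succ' (fun i => f (a i) (b (m - i))), hshift, Nat.sub_zero]
  simp only [sum_add_distrib, sum_sub_distrib, htel]
  abel

lemma abs_add_add_sum_range_le {A B δ : ℝ} {T : ℕ → ℝ} {m : ℕ}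
    (hA : |A| ≤ δ) (hB : |B| ≤ δ)
    (hT : ∀ k ∈ range m, |T k| ≤ δ) : |A + B + ∑ k ∈ range m, T k| ≤ (m + 2) * δ := by
  have hsum : |∑ k ∈ range m, T k| ≤ m * δ :=
    calc |∑ k ∈ range m, T k| ≤ ∑ k ∈ range m, |T k| := abs_sum_le_sum_abs _ _
      _ ≤ ∑ _k ∈ range m, δ := sum_le_sum hT
      _ = m * δ := by rw [sum_const, card_range, nsmul_eq_mul]
  calc |A + B + ∑ k ∈ range m, T k| ≤ |A| + |B| + |∑ k ∈ range m, T k| :=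
        abs_add_three _ _ _
    _ ≤ (m + 2) * δ := by linarith

def IsMixedHolder (c α : ℝ) (f : ℝ → ℝ → ℝ) : Prop :=
  (∀ x ∈ Set.Icc (0:ℝ) 1, ∀ x' ∈ Set.Icc (0:ℝ) 1, ∀ y ∈ Set.Icc (0:ℝ) 1,
    |f x' y - f x y| ≤ c * |x' - x| ^ α) ∧
  (∀ x ∈ Set.Icc (0:ℝ) 1, ∀ y ∈ Set.Icc (0:ℝ) 1, ∀ y' ∈ Set.Icc (0:ℝ) 1,
    |f x y' - f x y| ≤ c * |y' - y| ^ α) ∧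
  (∀ x ∈ Set.Icc (0:ℝ) 1, ∀ x' ∈ Set.Icc (0:ℝ) 1, ∀ y ∈ Set.Icc (0:ℝ) 1,
    ∀ y' ∈ Set.Icc (0:ℝ) 1,
    |f x' y' - f x' y - f x y' + f x y| ≤ c * (|x' - x| * |y' - y|) ^ α)

namespace IsMixedHolder

variable {c α x y : ℝ} {f : ℝ → ℝ → ℝ}

lemma abs_sub_ctr_fst_le (hf : IsMixedHolder c α f) (hc : 0 ≤ c) (hα : 0 ≤ α)
    (hx : x ∈ Set.Ico (0 : ℝ) 1) (hy : y ∈ Set.Icc (0 : ℝ) 1) (i : ℕ) :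
    |f x y - f (ctr i x) y| ≤ c * ((1 / 2) ^ i) ^ α :=
  calc |f x y - f (ctr i x) y| ≤ c * |x - ctr i x| ^ α :=
        hf.1 _ (ctr_mem_Icc i hx) _ (Set.Ico_subset_Icc_self hx) _ hy
    _ ≤ c * ((1 / 2) ^ i) ^ α := by
        gcongr
        exact abs_sub_ctr_le_pow i x

lemma abs_sub_ctr_snd_le (hf : IsMixedHolder c α f) (hc : 0 ≤ c) (hα : 0 ≤ α)
    (hx : x ∈ Set.Icc (0 : ℝ) 1) (hy : y ∈ Set.Ico (0 : ℝ) 1) (j : ℕ) :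
    |f x y - f x (ctr j y)| ≤ c * ((1 / 2) ^ j) ^ α :=
  calc |f x y - f x (ctr j y)| ≤ c * |y - ctr j y| ^ α :=
        hf.2.1 _ hx _ (ctr_mem_Icc j hy) _ (Set.Ico_subset_Icc_self hy)
    _ ≤ c * ((1 / 2) ^ j) ^ α := by
        gcongr
        exact abs_sub_ctr_le_pow j y

lemma abs_mixed_diff_ctr_le (hf : IsMixedHolder c α f) (hc : 0 ≤ c) (hα : 0 ≤ α)
    (hx : x ∈ Set.Ico (0 : ℝ) 1) (hy : y ∈ Set.Ico (0 : ℝ) 1) (i j : ℕ) :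
    |f (ctr (i + 1) x) y - f (ctr (i + 1) x) (ctr j y) - f (ctr i x) y + f (ctr i x) (ctr j y)| ≤
      c * ((1 / 2) ^ (i + j + 1)) ^ α :=
  calc _ ≤ c * (|ctr (i + 1) x - ctr i x| * |y - ctr j y|) ^ α :=
        hf.2.2 _ (ctr_mem_Icc i hx) _ (ctr_mem_Icc (i + 1) hx) _ (ctr_mem_Icc j hy) _
          (Set.Ico_subset_Icc_self hy)
    _ ≤ c * ((1 / 2) ^ i * (1 / 2) ^ (j + 1)) ^ α := by
        gcongr
        exacts [abs_ctr_succ_sub_ctr_le i x, abs_sub_ctr_le j y]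
    _ = c * ((1 / 2) ^ (i + j + 1)) ^ α := by rw [← pow_add, add_assoc]

end IsMixedHolder

theorem stmt7_general (c α : ℝ) (hc : 0 < c) (hα : 0 < α) :
    ∃ C : ℝ, 0 < C ∧ ∀ f : ℝ → ℝ → ℝ,
      (∀ x ∈ Set.Icc (0:ℝ) 1, ∀ x' ∈ Set.Icc (0:ℝ) 1, ∀ y ∈ Set.Icc (0:ℝ) 1,
        |f x' y - f x y| ≤ c * |x' - x| ^ α) →
      (∀ x ∈ Set.Icc (0:ℝ) 1, ∀ y ∈ Set.Icc (0:ℝ) 1, ∀ y' ∈ Set.Icc (0:ℝ) 1,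
        |f x y' - f x y| ≤ c * |y' - y| ^ α) →
      (∀ x ∈ Set.Icc (0:ℝ) 1, ∀ x' ∈ Set.Icc (0:ℝ) 1, ∀ y ∈ Set.Icc (0:ℝ) 1,
        ∀ y' ∈ Set.Icc (0:ℝ) 1,
        |f x' y' - f x' y - f x y' + f x y| ≤ c * (|x' - x| * |y' - y|) ^ α) →
      ∀ x ∈ Set.Ico (0:ℝ) 1, ∀ y ∈ Set.Ico (0:ℝ) 1, ∀ m : ℕ, 1 ≤ m →
        |f x y - (∑ i ∈ Finset.range (m + 1), f (ctr i x) (ctr (m - i) y))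
            + ∑ i ∈ Finset.range m, f (ctr i x) (ctr (m - 1 - i) y)|
          ≤ C * ((1/2 : ℝ) ^ m) ^ α * m := by
  refine ⟨3 * c, by positivity, fun f h1 h2 h3 x hx y hy m hm => ?_⟩
  have hf : IsMixedHolder c α f := ⟨h1, h2, h3⟩
  have hmixed : ∀ k ∈ range m, |f (ctr (k + 1) x) y - f (ctr (k + 1) x) (ctr (m - 1 - k) y)
      - f (ctr k x) y + f (ctr k x) (ctr (m - 1 - k) y)| ≤ c * ((1 / 2) ^ m) ^ α := by
    intro k hk
    have hkm : k + (m - 1 - k) + 1 = m := by have := mem_range.mp hk; omega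
    simpa only [hkm] using hf.abs_mixed_diff_ctr_le hc.le hα.le hx hy k (m - 1 - k)
  rw [sub_sum_range_add_sum_range_eq f (ctr · x) (ctr · y)]
  calc _ ≤ (m + 2) * (c * ((1 / 2) ^ m) ^ α) :=
        abs_add_add_sum_range_le
          (hf.abs_sub_ctr_fst_le hc.le hα.le hx (Set.Ico_subset_Icc_self hy) m)
          (hf.abs_sub_ctr_snd_le hc.le hα.le (ctr_mem_Icc 0 hx) hy m) hmixed
    _ ≤ 3 * c * ((1 / 2 : ℝ) ^ m) ^ α * m := by
        have hm' : (1 : ℝ) ≤ m := by exact_mod_cast hm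
        have hδ : 0 ≤ c * ((1 / 2 : ℝ) ^ m) ^ α := by positivity
        nlinarith

/-- Smolyak's lemma in dimension 2: there is `C = C(c,α)` such that for every
`(c,α)`-mixed Hölder `f : [0,1]^2 → ℝ`, every `(x,y) ∈ [0,1)^2` and `m ≥ 1`,
`|f(x,y) - ∑_{i+j=m} f_{(i,j)} + ∑_{i+j=m-1} f_{(i,j)}| ≤ C 2^{-αm} m`,
where `f_{(i,j)}` is `f` at the center of the dyadic box of dimensions `2^{-i} × 2^{-j}`
containing `(x,y)`. -/
theorem stmt7 (c α : ℝ) (hc : 0 < c) (hα : 0 < α) (hα1 : α ≤ 1) :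
    ∃ C : ℝ, 0 < C ∧ ∀ f : ℝ → ℝ → ℝ,
      (∀ x ∈ Set.Icc (0:ℝ) 1, ∀ x' ∈ Set.Icc (0:ℝ) 1, ∀ y ∈ Set.Icc (0:ℝ) 1,
        |f x' y - f x y| ≤ c * |x' - x| ^ α) →
      (∀ x ∈ Set.Icc (0:ℝ) 1, ∀ y ∈ Set.Icc (0:ℝ) 1, ∀ y' ∈ Set.Icc (0:ℝ) 1,
        |f x y' - f x y| ≤ c * |y' - y| ^ α) →
      (∀ x ∈ Set.Icc (0:ℝ) 1, ∀ x' ∈ Set.Icc (0:ℝ) 1, ∀ y ∈ Set.Icc (0:ℝ) 1,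
        ∀ y' ∈ Set.Icc (0:ℝ) 1,
        |f x' y' - f x' y - f x y' + f x y| ≤ c * (|x' - x| * |y' - y|) ^ α) →
      ∀ x ∈ Set.Ico (0:ℝ) 1, ∀ y ∈ Set.Ico (0:ℝ) 1, ∀ m : ℕ, 1 ≤ m →
        |f x y - (∑ i ∈ Finset.range (m + 1), f (ctr i x) (ctr (m - i) y))
            + ∑ i ∈ Finset.range m, f (ctr i x) (ctr (m - 1 - i) y)|
          ≤ C * ((1/2 : ℝ) ^ m) ^ α * m :=
  stmt7_general c α hc hα
end

section
/- Noisy randomized Kaczmarz error accumulation: let Ψ : Ω → ℝ^p with Ψ(ω) ≠ 0 for all ω, let e_0 = 0, and for a sequence ω_1, ω_2, ... in Ω and scalars ε_1, ε_2, ... define e_n = e_{n-1} + ((ε_n - ⟨Ψ(ω_n), e_{n-1}⟩)/||Ψ(ω_n)||_2^2) Ψ(ω_n). Then for every n, ||e_n||_2^2 ≤ ∑_{j=1}^n ε_j^2 / ||Ψ(ω_j)||_2^2. -/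
/- One Kaczmarz step writes `x + c • ψ` as the sum of the orthogonal vectors
`x - (⟪ψ, x⟫ / ‖ψ‖²) • ψ` and `(ε / ‖ψ‖²) • ψ`; by Pythagoras it changes `‖x‖²` by
`(ε² - ⟪ψ, x⟫²) / ‖ψ‖² ≤ ε² / ‖ψ‖²`, and these increments telescope from `e 0 = 0`. -/

open RealInnerProductSpace

section KaczmarzStep

variable {E : Type*} [NormedAddCommGroup E] [InnerProductSpace ℝ E] {ψ : E}

theorem norm_sq_add_kaczmarz_step (hψ : ψ ≠ 0) (x : E) (ε : ℝ) :
    ‖x + ((ε - ⟪ψ, x⟫) / ‖ψ‖ ^ 2) • ψ‖ ^ 2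
      = ‖x‖ ^ 2 + (ε ^ 2 - ⟪ψ, x⟫ ^ 2) / ‖ψ‖ ^ 2 := by
  have hψ2 : ‖ψ‖ ^ 2 ≠ 0 := by positivity
  rw [norm_add_sq_real, real_inner_smul_right, real_inner_comm, norm_smul, mul_pow,
    Real.norm_eq_abs, sq_abs]
  field_simp
  ring

theorem norm_sq_add_kaczmarz_step_le (hψ : ψ ≠ 0) (x : E) (ε : ℝ) :
    ‖x + ((ε - ⟪ψ, x⟫) / ‖ψ‖ ^ 2) • ψ‖ ^ 2 ≤ ‖x‖ ^ 2 + ε ^ 2 / ‖ψ‖ ^ 2 := by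
  rw [norm_sq_add_kaczmarz_step hψ]
  gcongr
  nlinarith [sq_nonneg ⟪ψ, x⟫]

end KaczmarzStep

/-- Noisy randomized Kaczmarz error accumulation: with `e_0 = 0` and
`e_n = e_{n-1} + ((ε_n - ⟨Ψ(ω_n), e_{n-1}⟩)/‖Ψ(ω_n)‖²) Ψ(ω_n)`, one has
`‖e_n‖² ≤ ∑_{j=1}^n ε_j² / ‖Ψ(ω_j)‖²`. -/
theorem stmt17 (p : ℕ) (Ω : Type*) (Ψ : Ω → EuclideanSpace ℝ (Fin p))
    (hΨ : ∀ ω, Ψ ω ≠ 0) (ω : ℕ → Ω) (ε : ℕ → ℝ)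
    (e : ℕ → EuclideanSpace ℝ (Fin p)) (he0 : e 0 = 0)
    (he : ∀ n : ℕ, e (n + 1) = e n
      + (((ε (n + 1) - (inner ℝ (Ψ (ω (n + 1))) (e n) : ℝ)) / ‖Ψ (ω (n + 1))‖ ^ 2)
          • Ψ (ω (n + 1)))) :
    ∀ n : ℕ, ‖e n‖ ^ 2 ≤ ∑ j ∈ Finset.Icc 1 n, ε j ^ 2 / ‖Ψ (ω j)‖ ^ 2 := by
  intro n
  induction n with
  | zero => simp [he0]
  | succ n ih =>
    rw [Finset.sum_Icc_succ_top (by omega), he n]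
    exact (norm_sq_add_kaczmarz_step_le (hΨ _) _ _).trans (by gcongr)
end

section
/- Single-step randomized Kaczmarz contraction: let A be an N × p real matrix (N ≥ p) of rank p whose rows a_1,...,a_N all have the same Euclidean norm, let Aw = b be a consistent system, let I be uniformly random in {1,...,N}, and for any w_0 ∈ ℝ^p set w_1 = w_0 + ((b_I - ⟨a_I, w_0⟩)/||a_I||_2^2) a_I. Then E||w_1 - w||_2^2 ≤ (1 - σ_p^2/∑_{j=1}^p σ_j^2) ||w_0 - w||_2^2, where σ_1 ≥ ... ≥ σ_p > 0 are the singular values of A. -/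
/-! A Kaczmarz step on row `aᵢ` is the orthogonal projection of the error `e = w₀ - w` onto the
hyperplane `aᵢ⊥`, so it lowers `‖e‖²` by exactly `⟨aᵢ, e⟩² / ρ`. Averaging over the `N` rows
gives the gain `‖A e‖² / (N ρ) = ‖A e‖² / ‖A‖_F²`, which is at least `σmin ‖e‖² / ‖A‖_F²`. -/

open Finset Matrix

namespace Kaczmarz

-- Also true for `a = 0`: then `ρ = 0`, and both sides reduce to `∑ j, e j ^ 2` as `x / 0 = 0`.
theorem sum_sq_sub_proj {n : Type*} [Fintype n] (a e : n → ℝ) (ρ : ℝ)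
    (ha : ∑ j, a j ^ 2 = ρ) :
    ∑ j, (e j - (∑ k, a k * e k) / ρ * a j) ^ 2
      = ∑ j, e j ^ 2 - (∑ j, a j * e j) ^ 2 / ρ := by
  set s := ∑ k, a k * e k
  have expand : ∑ j, (e j - s / ρ * a j) ^ 2
      = ∑ j, e j ^ 2 - 2 * (s / ρ) * s + (s / ρ) ^ 2 * ρ := by
    have termwise : ∀ j, (e j - s / ρ * a j) ^ 2
        = e j ^ 2 - 2 * (s / ρ) * (a j * e j) + (s / ρ) ^ 2 * a j ^ 2 := fun j => by ring
    simp only [termwise, sum_add_distrib, sum_sub_distrib, ← mul_sum, ha, s]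
  rw [expand]
  rcases eq_or_ne ρ 0 with hρ | hρ
  · simp [hρ]
  · field_simp
    ring

theorem sum_sq_step_sub {m n : Type*} [Fintype n] (A : Matrix m n ℝ) (b : m → ℝ)
    (w x : n → ℝ) (hb : A *ᵥ w = b) (ρ : ℝ) (i : m) (hi : ∑ j, A i j ^ 2 = ρ) :
    ∑ j, (x j + ((b i - ∑ j', A i j' * x j') / ρ) * A i j - w j) ^ 2
      = ∑ j, (x j - w j) ^ 2 - (A *ᵥ (x - w)) i ^ 2 / ρ := by
  have residual : b i - ∑ j', A i j' * x j' = -∑ j', A i j' * (x j' - w j') := by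
    simp only [← hb, mulVec, dotProduct, mul_sub, sum_sub_distrib]
    ring
  have hproj := sum_sq_sub_proj (A i) (x - w) ρ hi
  simp only [Pi.sub_apply] at hproj
  simp only [residual, mulVec, dotProduct, Pi.sub_apply, ← hproj]
  congr 1
  ext j
  ring

theorem average_sum_sq_step_sub {m n : Type*} [Fintype m] [Fintype n] [Nonempty m]
    (A : Matrix m n ℝ) (b : m → ℝ) (w x : n → ℝ) (hb : A *ᵥ w = b) (ρ : ℝ)
    (hrow : ∀ i, ∑ j, A i j ^ 2 = ρ) :
    (1 / Fintype.card m : ℝ) *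
        ∑ i, ∑ j, (x j + ((b i - ∑ j', A i j' * x j') / ρ) * A i j - w j) ^ 2
      = ∑ j, (x j - w j) ^ 2 - (∑ i, (A *ᵥ (x - w)) i ^ 2) / ∑ i, ∑ j, A i j ^ 2 := by
  have hcard : (Fintype.card m : ℝ) ≠ 0 := by positivity
  simp only [fun i => sum_sq_step_sub A b w x hb ρ i (hrow i), hrow, sum_sub_distrib,
    sum_const, card_univ, nsmul_eq_mul, ← sum_div]
  rw [mul_sub, ← mul_assoc, one_div_mul_cancel hcard, one_mul, one_div_mul_eq_div, div_div,
    mul_comm ρ]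

end Kaczmarz

open Kaczmarz in
theorem stmt18_general (N p : ℕ) (hp : 0 < p) (hN : p ≤ N)
    (A : Matrix (Fin N) (Fin p) ℝ)
    (ρ : ℝ) (hrow : ∀ i, ∑ j, A i j ^ 2 = ρ)
    (w w₀ : Fin p → ℝ) (b : Fin N → ℝ) (hb : A.mulVec w = b)
    (σmin : ℝ)
    (hσ : ∀ v : Fin p → ℝ, σmin * ∑ j, v j ^ 2 ≤ ∑ i, (A.mulVec v i) ^ 2) :
    (1 / N : ℝ) * ∑ i : Fin N,
        ∑ j, ((w₀ j + ((b i - ∑ j', A i j' * w₀ j') / ρ) * A i j) - w j) ^ 2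
      ≤ (1 - σmin / ∑ i, ∑ j, A i j ^ 2) * ∑ j, (w₀ j - w j) ^ 2 := by
  have : Nonempty (Fin N) := ⟨⟨0, hp.trans_le hN⟩⟩
  have hfrob : 0 ≤ ∑ i, ∑ j, A i j ^ 2 := by positivity
  have hgain : σmin * ∑ j, (w₀ j - w j) ^ 2 ≤ ∑ i, (A *ᵥ (w₀ - w)) i ^ 2 := by
    simpa only [Pi.sub_apply] using hσ (w₀ - w)
  have hmean := average_sum_sq_step_sub A b w w₀ hb ρ hrow
  rw [Fintype.card_fin] at hmean
  rw [hmean]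
  calc _ ≤ ∑ j, (w₀ j - w j) ^ 2 - (σmin * ∑ j, (w₀ j - w j) ^ 2) / ∑ i, ∑ j, A i j ^ 2 :=
        sub_le_sub_left (div_le_div_of_nonneg_right hgain hfrob) _
    _ = _ := by ring

/-- Single-step randomized Kaczmarz contraction: for an `N × p` matrix `A` of rank `p`
whose rows all have Euclidean norm `√ρ`, a consistent system `A w = b`, and a uniformly
random row index, the expected squared error after one Kaczmarz step contracts by the
factor `1 - σ_p²/∑_j σ_j²`.  Here `σmin` is any lower bound for the squared smallest
singular value (i.e. `σmin ‖v‖² ≤ ‖Av‖²` for all `v`, with equality attainable at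
`σmin = σ_p²`), and `∑_j σ_j² = ‖A‖_F² = ∑_{i,j} A_{ij}²`.  The expectation over the
uniformly random row index is written as the average over `i`. -/
theorem stmt18 (N p : ℕ) (hp : 0 < p) (hN : p ≤ N)
    (A : Matrix (Fin N) (Fin p) ℝ) (hrank : A.rank = p)
    (ρ : ℝ) (hρ : 0 < ρ) (hrow : ∀ i, ∑ j, A i j ^ 2 = ρ)
    (w w₀ : Fin p → ℝ) (b : Fin N → ℝ) (hb : A.mulVec w = b)
    (σmin : ℝ) (hσmin : 0 < σmin)
    (hσ : ∀ v : Fin p → ℝ, σmin * ∑ j, v j ^ 2 ≤ ∑ i, (A.mulVec v i) ^ 2) :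
    (1 / N : ℝ) * ∑ i : Fin N,
        ∑ j, ((w₀ j + ((b i - ∑ j', A i j' * w₀ j') / ρ) * A i j) - w j) ^ 2
      ≤ (1 - σmin / ∑ i, ∑ j, A i j ^ 2) * ∑ j, (w₀ j - w j) ^ 2 :=
  stmt18_general N p hp hN A ρ hrow w w₀ b hb σmin hσ
end

section
/- If all singular values of an N × p matrix A are equal to σ > 0 (i.e., A^T A = σ^2 I_p), its rows all have equal norm, and Aw = b is consistent, then the randomized Kaczmarz iteration with independent uniform row indices satisfies E||w_n - w||_2^2 ≤ (1 - 1/p)^n ||w_0 - w||_2^2 for all n ≥ 0. -/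
open Finset

/-- One step of the Kaczmarz iteration using row `i` of `A`. -/
noncomputable def kacStep (N p : ℕ) (A : Matrix (Fin N) (Fin p) ℝ) (b : Fin N → ℝ)
    (i : Fin N) (v : Fin p → ℝ) : Fin p → ℝ :=
  fun j => v j + ((b i - ∑ j', A i j' * v j') / ∑ j', A i j' ^ 2) * A i j

/-- The Kaczmarz iterate after applying the steps for the row indices
`seq 0, seq 1, …, seq (n-1)` in order, starting from `w₀`. -/
noncomputable def kacIter (N p n : ℕ) (A : Matrix (Fin N) (Fin p) ℝ) (b : Fin N → ℝ)
    (w₀ : Fin p → ℝ) (seq : Fin n → Fin N) : Fin p → ℝ :=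
  (List.ofFn seq).foldl (fun v i => kacStep N p A b i v) w₀

/-!
Because `A w = b`, a Kaczmarz step with row `a` replaces the error `e = v - w` by its orthogonal
projection `e - (⟨a, e⟩ / ‖a‖²) a` onto `a^⊥`, so `‖e'‖² = ‖e‖² - ⟨a, e⟩² / ‖a‖²`. All rows
have the same squared norm `c`, and `N c = tr (AᵀA) = p σ²`; together with
`∑ᵢ ⟨aᵢ, e⟩² = σ² ‖e‖²` this makes the sum of `‖e'‖²` over the `N` rows exactly
`N (1 - 1/p) ‖e‖²`. The sum over index sequences factors one step at a time, so the average over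
all `N^n` sequences equals `(1 - 1/p)^n ‖w₀ - w‖²`.
-/

theorem sum_fin_succ_pi {α M : Type*} [Fintype α] [AddCommMonoid M] (n : ℕ)
    (f : (Fin (n + 1) → α) → M) :
    ∑ s, f s = ∑ i, ∑ s : Fin n → α, f (Fin.cons i s) := by
  rw [← (Fin.consEquiv fun _ => α).sum_comp, Fintype.sum_prod_type]
  rfl

theorem sum_foldl_ofFn {α β R : Type*} [Fintype α] [Semiring R] (f : β → α → β) (g : β → R)
    (r : R) (hf : ∀ v, ∑ i, g (f v i) = r * g v) (n : ℕ) (v : β) :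
    ∑ s : Fin n → α, g ((List.ofFn s).foldl f v) = r ^ n * g v := by
  induction n generalizing v with
  | zero => simp
  | succ n ih =>
    simp only [sum_fin_succ_pi, List.ofFn_succ, Fin.cons_zero, Fin.cons_succ, List.foldl_cons,
      ih, ← Finset.mul_sum, hf, pow_succ, mul_assoc]

namespace Matrix

theorem dotProduct_self_sub_div_smul {ι K : Type*} [Fintype ι] [Field K] (a e : ι → K) :
    (e - (a ⬝ᵥ e / a ⬝ᵥ a) • a) ⬝ᵥ (e - (a ⬝ᵥ e / a ⬝ᵥ a) • a)
      = e ⬝ᵥ e - (a ⬝ᵥ e) ^ 2 / a ⬝ᵥ a := by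
  rcases eq_or_ne (a ⬝ᵥ a) 0 with h | h
  · simp [h]
  · simp only [sub_dotProduct, dotProduct_sub, smul_dotProduct, dotProduct_smul,
      dotProduct_comm e a, smul_eq_mul]
    field_simp
    ring

variable {m n R : Type*} [Fintype m] [Fintype n] [DecidableEq n] [CommRing R]
  {A : Matrix m n R} {s : R}

theorem sum_row_dotProduct_sq_of_transpose_mul_self_eq (hA : Aᵀ * A = s • 1) (e : n → R) :
    ∑ i, (A i ⬝ᵥ e) ^ 2 = s * e ⬝ᵥ e :=
  calc ∑ i, (A i ⬝ᵥ e) ^ 2 = (A *ᵥ e) ⬝ᵥ (A *ᵥ e) := by simp [dotProduct, mulVec, sq]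
    _ = e ⬝ᵥ ((Aᵀ * A) *ᵥ e) := by
      rw [← mulVec_mulVec, dotProduct_mulVec, mulVec_transpose, dotProduct_comm]
    _ = s * e ⬝ᵥ e := by simp [hA, smul_mulVec, dotProduct_smul]

theorem sum_row_dotProduct_self_of_transpose_mul_self_eq (hA : Aᵀ * A = s • 1) :
    ∑ i, A i ⬝ᵥ A i = Fintype.card n * s :=
  calc ∑ i, A i ⬝ᵥ A i = trace (Aᵀ * A) := by
        simp only [dotProduct, trace, Matrix.diag, mul_apply, transpose_apply]
        exact sum_comm
    _ = Fintype.card n * s := by simp [hA, mul_comm]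

end Matrix

open Matrix

theorem kacStep_sub_of_mulVec_eq {N p : ℕ} {A : Matrix (Fin N) (Fin p) ℝ} {b : Fin N → ℝ}
    {w : Fin p → ℝ} (hb : A *ᵥ w = b) (i : Fin N) (v : Fin p → ℝ) :
    kacStep N p A b i v - w = (v - w) - (A i ⬝ᵥ (v - w) / A i ⬝ᵥ A i) • A i := by
  have hbi : b i = A i ⬝ᵥ w := by rw [← hb]; rfl
  ext j
  simp only [kacStep, Pi.sub_apply, Pi.smul_apply, smul_eq_mul, hbi, dotProduct_sub]
  simp only [dotProduct, sq]
  ring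

theorem sum_kacStep_sub_dotProduct_self {N p : ℕ} {A : Matrix (Fin N) (Fin p) ℝ}
    {b : Fin N → ℝ} {w : Fin p → ℝ} {s c : ℝ} (hA : Aᵀ * A = s • 1)
    (hrow : ∀ i, A i ⬝ᵥ A i = c) (hb : A *ᵥ w = b) (v : Fin p → ℝ) :
    ∑ i, (kacStep N p A b i v - w) ⬝ᵥ (kacStep N p A b i v - w)
      = (N - s / c) * ((v - w) ⬝ᵥ (v - w)) := by
  simp only [kacStep_sub_of_mulVec_eq hb, dotProduct_self_sub_div_smul]
  rw [sum_sub_distrib, sum_const, card_univ, Fintype.card_fin, nsmul_eq_mul]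
  simp only [hrow, ← sum_div, sum_row_dotProduct_sq_of_transpose_mul_self_eq hA]
  ring

/-- If all singular values of `A` equal `σ > 0` (i.e. `AᵀA = σ² I`), its rows all have
equal norm, and `A w = b` is consistent, then randomized Kaczmarz with independent uniform
row indices satisfies `E‖w_n - w‖² ≤ (1 - 1/p)^n ‖w₀ - w‖²`; the expectation over the `n`
independent uniform indices is the average over all `N^n` index sequences. -/
theorem stmt19 (N p : ℕ) (hp : 0 < p) (hN : 0 < N)
    (A : Matrix (Fin N) (Fin p) ℝ) (σ : ℝ) (hσ : 0 < σ)
    (hATA : A.transpose * A = (σ ^ 2) • (1 : Matrix (Fin p) (Fin p) ℝ))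
    (hrow : ∀ i i' : Fin N, ∑ j, A i j ^ 2 = ∑ j, A i' j ^ 2)
    (w w₀ : Fin p → ℝ) (b : Fin N → ℝ) (hb : A.mulVec w = b) (n : ℕ) :
    (1 / (N : ℝ) ^ n) * ∑ seq : Fin n → Fin N,
        ∑ j, (kacIter N p n A b w₀ seq j - w j) ^ 2
      ≤ (1 - 1 / (p : ℝ)) ^ n * ∑ j, (w₀ j - w j) ^ 2 := by
  set c := A ⟨0, hN⟩ ⬝ᵥ A ⟨0, hN⟩
  have hrow_c : ∀ i, A i ⬝ᵥ A i = c := fun i => by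
    simp only [c, dotProduct, ← sq]
    exact hrow i _
  have hNc : N * c = p * σ ^ 2 := by
    simpa [hrow_c] using sum_row_dotProduct_self_of_transpose_mul_self_eq hATA
  have hc : c ≠ 0 := by
    refine right_ne_zero_of_mul (a := (N : ℝ)) ?_
    rw [hNc]
    exact mul_ne_zero (by exact_mod_cast hp.ne') (by positivity)
  have hdist : ∀ x : Fin p → ℝ, ∑ j, (x j - w j) ^ 2 = (x - w) ⬝ᵥ (x - w) := fun x => by
    simp [dotProduct, sq]
  have hstep : ∀ v, ∑ i, ∑ j, (kacStep N p A b i v j - w j) ^ 2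
      = N * (1 - 1 / p) * ∑ j, (v j - w j) ^ 2 := fun v => by
    simp only [hdist, sum_kacStep_sub_dotProduct_self hATA hrow_c hb]
    congr 1
    field_simp
    linear_combination hNc
  have hN' : (N : ℝ) ≠ 0 := by exact_mod_cast hN.ne'
  unfold kacIter
  rw [sum_foldl_ofFn _ (fun x : Fin p → ℝ => ∑ j, (x j - w j) ^ 2) _ hstep, mul_pow,
    ← mul_assoc, ← mul_assoc, one_div_mul_cancel (pow_ne_zero n hN'), one_mul]
end
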